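/- arXiv:1603.09077 — 2 statements merged into one kernel-verified Lean document; each statement's English description precedes it below -/
import Mathlib

section
/- Let x ∈ Δ and let i ≥ 1 be an integer. Then Σ_{j=i+1}^{∞} P(Y(j,x) = i and Y(j+1,x) = i+1) equals P(Y(i+1,x) ≤ i) if x ∉ Δ_i, and equals 0 if x ∈ Δ_i. -/
open MeasureTheory ProbabilityTheory

/-- `x` belongs to the infinite simplex `Δ`: the relevant coordinates are `x 1, x 2, …`,
which are nonnegative, nonincreasing, summable with sum `|x| ≤ 1` (the value `x 0` is
irrelevant). -/
def MemDelta (x : ℕ → ℝ) : Prop :=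
  (∀ r : ℕ, 1 ≤ r → 0 ≤ x r) ∧ (∀ r : ℕ, 1 ≤ r → x (r + 1) ≤ x r) ∧
    Summable (fun n : ℕ => x (n + 1)) ∧ (∑' n : ℕ, x (n + 1)) ≤ 1

/-- `x₀ := 1 - |x|`. -/
noncomputable def xZero (x : ℕ → ℝ) : ℝ := 1 - ∑' n : ℕ, x (n + 1)

/-- Kingman's paintbox count after `i` balls (the balls being `ξ 0, …, ξ (i-1)`):
the number of balls in box `0` plus the number of nonempty boxes among the boxes `r ≥ 1`. -/
def Ycount {Ω : Type*} (ξ : ℕ → Ω → ℕ) (i : ℕ) (ω : Ω) : ℕ :=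
  ((Finset.range i).filter fun l => ξ l ω = 0).card +
    (((Finset.range i).image fun l => ξ l ω).erase 0).card

/-- the i.i.d. paintbox model driven by `x ∈ Δ`: the balls `ξ 0, ξ 1, …` are independent,
each with distribution `P(ξ l = 0) = x₀` and `P(ξ l = r) = x r` for `r ≥ 1`. -/
structure IsPaintbox {Ω : Type*} [MeasurableSpace Ω] (P : Measure Ω)
    (x : ℕ → ℝ) (ξ : ℕ → Ω → ℕ) : Prop where
  meas : ∀ l, Measurable (ξ l)
  indep : iIndepFun ξ P
  dist0 : ∀ l, P {ω | ξ l ω = 0} = ENNReal.ofReal (xZero x)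
  dist : ∀ l r : ℕ, 1 ≤ r → P {ω | ξ l ω = r} = ENNReal.ofReal (x r)

/-
The variables `Y(j)` form a nondecreasing integer sequence with increments at most one, so
`Y(j) = i, Y(j+1) = i+1` happens for at most one `j`, and for exactly one `j ≥ i+1` precisely
when `Y(i+1) ≤ i` and `Y` eventually exceeds `i`. The sum is therefore the probability of that
event. If `x ∉ Δ_i`, then `x₀ > 0` or `x_{i+1} > 0`; by the second Borel–Cantelli lemma either
box `0` receives infinitely many balls or each of the boxes `1, …, i+1` is hit, so almost surely
`Y` exceeds `i`. If `x ∈ Δ_i`, almost surely every ball lands in one of the boxes `1, …, i`, so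
`Y ≤ i` forever.
-/

open Filter Finset

lemma Monotone.exists_eq_and_succ_eq {f : ℕ → ℕ} (hf : Monotone f)
    (hstep : ∀ n, f (n + 1) ≤ f n + 1) {n i M : ℕ} (hn : f n ≤ i) (hM : i + 1 ≤ f M) :
    ∃ m, f (n + m) = i ∧ f (n + m + 1) = i + 1 := by
  by_contra! hnot
  have hle : ∀ m, f (n + m) ≤ i := by
    intro m
    induction m with
    | zero => simpa using hn
    | succ m ih =>
      rw [← add_assoc]
      have := hstep (n + m)
      have := hnot m
      omega
  rcases le_total M n with hMn | hnM
  · have := hf hMn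
    omega
  · have := hle (M - n)
    rw [Nat.add_sub_cancel' hnM] at this
    omega

section Ycount

variable {Ω : Type*} (ξ : ℕ → Ω → ℕ)

lemma Ycount_succ (m : ℕ) (ω : Ω) :
    Ycount ξ (m + 1) ω =
      Ycount ξ m ω + if ξ m ω = 0 ∨ ∀ l < m, ξ l ω ≠ ξ m ω then 1 else 0 := by
  classical
  unfold Ycount
  rw [range_add_one, filter_insert, image_insert]
  by_cases h0 : ξ m ω = 0
  · rw [if_pos h0, card_insert_of_notMem (by simp), h0, erase_insert_eq_erase,
      if_pos (Or.inl rfl)]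
    omega
  · rw [if_neg h0, erase_insert_of_ne h0]
    by_cases hnew : ∀ l < m, ξ l ω ≠ ξ m ω
    · rw [card_insert_of_notMem (by simpa using fun _ l hl => hnew l hl), if_pos (Or.inr hnew)]
      omega
    · push Not at hnew
      obtain ⟨l, hl, hle⟩ := hnew
      rw [card_insert_of_mem (mem_erase.2 ⟨h0, mem_image.2 ⟨l, mem_range.2 hl, hle⟩⟩),
        if_neg (by tauto)]
      simp

lemma Ycount_succ_le (m : ℕ) (ω : Ω) : Ycount ξ (m + 1) ω ≤ Ycount ξ m ω + 1 := by
  rw [Ycount_succ]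
  split <;> omega

lemma monotone_Ycount (ω : Ω) : Monotone (Ycount ξ · ω) :=
  monotone_nat_of_le_succ fun m => by rw [Ycount_succ]; omega

variable {ξ} {ω : Ω}

lemma measurable_Ycount [MeasurableSpace Ω] (hξ : ∀ l, Measurable (ξ l)) (m : ℕ) :
    Measurable (Ycount ξ m) := by
  induction m with
  | zero =>
    have : Ycount ξ 0 = fun _ => 0 := funext fun _ => by simp [Ycount]
    exact this ▸ measurable_const
  | succ n ih =>
    rw [show Ycount ξ (n + 1) = _ from funext (Ycount_succ ξ n)]
    exact ih.add (Measurable.ite (by measurability) measurable_const measurable_const)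

lemma exists_le_Ycount_of_frequently_eq_zero (h : ∃ᶠ l in atTop, ξ l ω = 0) (k : ℕ) :
    ∃ M, k ≤ Ycount ξ M ω := by
  obtain ⟨t, ht, rfl⟩ := (Nat.frequently_atTop_iff_infinite.1 h).exists_subset_card_eq k
  refine ⟨t.sup id + 1, ?_⟩
  calc #t ≤ #{l ∈ range (t.sup id + 1) | ξ l ω = 0} :=
        card_le_card fun l hl => mem_filter.2 ⟨subset_range_sup_succ t hl, ht hl⟩
    _ ≤ Ycount ξ (t.sup id + 1) ω := Nat.le_add_right _ _

lemma exists_le_Ycount_of_forall_exists {k : ℕ} (h : ∀ r ∈ Icc 1 k, ∃ l, ξ l ω = r) :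
    ∃ M, k ≤ Ycount ξ M ω := by
  have hev : ∀ᶠ M in atTop, ∀ r ∈ Icc 1 k, ∃ l < M, ξ l ω = r :=
    (eventually_all_finset _).2 fun r hr =>
      let ⟨l, hl⟩ := h r hr
      eventually_atTop.2 ⟨l + 1, fun M hM => ⟨l, by omega, hl⟩⟩
  obtain ⟨M, hM⟩ := hev.exists
  refine ⟨M, ?_⟩
  calc k = #(Icc 1 k) := by simp
    _ ≤ #(((range M).image fun l => ξ l ω).erase 0) := card_le_card fun r hr => by
        obtain ⟨l, hl, rfl⟩ := hM r hr
        exact mem_erase.2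
          ⟨Nat.one_le_iff_ne_zero.1 (mem_Icc.1 hr).1, mem_image.2 ⟨l, mem_range.2 hl, rfl⟩⟩
    _ ≤ Ycount ξ M ω := Nat.le_add_left _ _

lemma Ycount_le_of_forall_mem_Icc {i : ℕ} (h : ∀ l, ξ l ω ∈ Icc 1 i) (m : ℕ) :
    Ycount ξ m ω ≤ i := by
  have hzero : {l ∈ range m | ξ l ω = 0} = ∅ :=
    filter_false_of_mem fun l _ => by have := mem_Icc.1 (h l); omega
  have hboxes : ((range m).image fun l => ξ l ω).erase 0 ⊆ Icc 1 i := fun r hr => by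
    obtain ⟨l, -, rfl⟩ := mem_image.1 (mem_of_mem_erase hr)
    exact h l
  simpa [Ycount, hzero] using card_le_card hboxes

end Ycount

namespace MemDelta

variable {x : ℕ → ℝ}

lemma antitoneOn (hx : MemDelta x) : AntitoneOn x (Set.Ici 1) :=
  antitoneOn_nat_Ici_of_succ_le fun r hr => hx.2.1 r hr

lemma xZero_nonneg (hx : MemDelta x) : 0 ≤ xZero x :=
  sub_nonneg.2 hx.2.2.2

lemma sum_Icc_eq_one_iff (hx : MemDelta x) (i : ℕ) :
    ∑ r ∈ Icc 1 i, x r = 1 ↔ xZero x = 0 ∧ x (i + 1) = 0 := by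
  have hsplit : ∑ r ∈ Icc 1 i, x r + ∑' k, x (k + i + 1) = ∑' n, x (n + 1) := by
    rw [← Ico_add_one_right_eq_Icc, sum_Ico_eq_sum_range, Nat.add_sub_cancel]
    simpa only [add_comm 1] using hx.2.2.1.sum_add_tsum_nat_add i
  have htail : ∑' k, x (k + i + 1) = 0 ↔ x (i + 1) = 0 := by
    have hnonneg : ∀ k, 0 ≤ x (k + i + 1) := fun k => hx.1 _ (by omega)
    refine ⟨fun h => (hx.1 _ (by omega)).antisymm' (not_lt.1 fun hpos => ?_), fun h => ?_⟩
    · have hsum : Summable fun k => x (k + i + 1) := (summable_nat_add_iff i).2 hx.2.2.1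
      exact (hsum.tsum_pos hnonneg 0 (by simpa using hpos)).ne' h
    · have hzero : ∀ k, x (k + i + 1) = 0 := fun k =>
        (hnonneg k).antisymm' (h ▸ hx.antitoneOn (by simp) (by simp) (by omega))
      simp [hzero]
  have htail_nonneg : 0 ≤ ∑' k, x (k + i + 1) := tsum_nonneg fun k => hx.1 _ (by omega)
  rw [← htail, ← add_eq_zero_iff_of_nonneg hx.xZero_nonneg htail_nonneg, xZero]
  constructor <;> intro h <;> linarith

end MemDelta

section Probability

variable {Ω : Type*} [MeasurableSpace Ω] {P : Measure Ω}

lemma ae_frequently_mem_of_iIndepFun [IsProbabilityMeasure P] {β : Type*} [MeasurableSpace β]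
    {ξ : ℕ → Ω → β} (hξ : ∀ l, Measurable (ξ l)) (hind : iIndepFun ξ P) {s : Set β}
    (hs : MeasurableSet s) {c : ENNReal} (hc : c ≠ 0) (hp : ∀ l, P (ξ l ⁻¹' s) = c) :
    ∀ᵐ ω ∂P, ∃ᶠ l in atTop, ξ l ω ∈ s := by
  have hindset : iIndepSet (fun l => ξ l ⁻¹' s) P :=
    iIndep_comap_mem_iff.1 (hind.comp (fun _ b => b ∈ s) fun _ => measurable_mem.2 hs)
  have hlimsup := measure_limsup_eq_one (fun l => hξ l hs) hindset
    (by simp [hp, ENNReal.tsum_const_eq_top_of_ne_zero hc])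
  rw [← prob_compl_eq_zero_iff (MeasurableSet.measurableSet_limsup fun l => hξ l hs),
    measure_eq_zero_iff_ae_notMem] at hlimsup
  filter_upwards [hlimsup] with ω hω
  simpa [mem_limsup_iff_frequently_mem, frequently_atTop] using hω

lemma tsum_measure_eq_and_succ_eq_toReal [IsFiniteMeasure P] {Z : ℕ → Ω → ℕ}
    (hZ : ∀ n, Measurable (Z n)) (hmono : ∀ ω, Monotone (Z · ω))
    (hstep : ∀ n ω, Z (n + 1) ω ≤ Z n ω + 1) (n i : ℕ) :
    ∑' m, (P {ω | Z (n + m) ω = i ∧ Z (n + m + 1) ω = i + 1}).toReal =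
      (P {ω | Z n ω ≤ i ∧ ∃ M, i + 1 ≤ Z M ω}).toReal := by
  set E : ℕ → Set Ω := fun m => {ω | Z (n + m) ω = i ∧ Z (n + m + 1) ω = i + 1}
  have hE : ∀ m, MeasurableSet (E m) := fun m =>
    (hZ _ (measurableSet_singleton i)).inter (hZ _ (measurableSet_singleton (i + 1)))
  have hdisj : Pairwise (Function.onFun Disjoint E) := by
    refine pairwise_disjoint_on E |>.2 fun a b hab => Set.disjoint_left.2 ?_
    rintro ω ⟨-, ha⟩ ⟨hb, -⟩
    have : Z (n + a + 1) ω ≤ Z (n + b) ω := hmono ω (by omega)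
    omega
  have hunion : ⋃ m, E m = {ω | Z n ω ≤ i ∧ ∃ M, i + 1 ≤ Z M ω} := by
    ext ω
    simp only [E, Set.mem_iUnion, Set.mem_ofPred_eq]
    constructor
    · rintro ⟨m, hm, hm1⟩
      exact ⟨hm ▸ hmono ω (Nat.le_add_right n m), n + m + 1, hm1.ge⟩
    · rintro ⟨hn, M, hM⟩
      exact (hmono ω).exists_eq_and_succ_eq (hstep · ω) hn hM
  rw [← hunion, measure_iUnion hdisj hE, ENNReal.tsum_toReal_eq fun _ => measure_ne_top _ _]

end Probability

namespace IsPaintbox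

variable {Ω : Type*} [MeasurableSpace Ω] {P : Measure Ω}
  {x : ℕ → ℝ} {ξ : ℕ → Ω → ℕ}

lemma ae_exists_le_Ycount [IsProbabilityMeasure P] (hξ : IsPaintbox P x ξ) (hx : MemDelta x)
    {k : ℕ} (h : 0 < xZero x ∨ 0 < x k) : ∀ᵐ ω ∂P, ∃ M, k ≤ Ycount ξ M ω := by
  rcases h with h0 | hk
  · filter_upwards [ae_frequently_mem_of_iIndepFun hξ.meas hξ.indep (measurableSet_singleton 0)
      (ENNReal.ofReal_pos.2 h0).ne' hξ.dist0] with ω hω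
    exact exists_le_Ycount_of_frequently_eq_zero hω k
  · have hbox : ∀ r ∈ Icc 1 k, ∀ᵐ ω ∂P, ∃ l, ξ l ω = r := fun r hr => by
      obtain ⟨hr1, hrk⟩ := mem_Icc.1 hr
      have hxr : 0 < x r := hk.trans_le (hx.antitoneOn hr1 (hr1.trans hrk) hrk)
      filter_upwards [ae_frequently_mem_of_iIndepFun hξ.meas hξ.indep (measurableSet_singleton r)
        (ENNReal.ofReal_pos.2 hxr).ne' (hξ.dist · r hr1)] with ω hω using hω.exists
    filter_upwards [(eventually_all_finset _).2 hbox] with ω hω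
    exact exists_le_Ycount_of_forall_exists hω

lemma ae_Ycount_le (hξ : IsPaintbox P x ξ) (hx : MemDelta x) {i : ℕ} (h0 : xZero x = 0)
    (hi : x (i + 1) = 0) : ∀ᵐ ω ∂P, ∀ M, Ycount ξ M ω ≤ i := by
  have hbox : ∀ l r, ∀ᵐ ω ∂P, ξ l ω = r → r ∈ Icc 1 i := by
    intro l r
    by_cases hr : r ∈ Icc 1 i
    · exact .of_forall fun _ _ => hr
    have hnull : P {ω | ξ l ω = r} = 0 := by
      rcases Nat.eq_zero_or_pos r with rfl | hr1
      · rw [hξ.dist0, h0, ENNReal.ofReal_zero]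
      · have hri : i + 1 ≤ r := by rw [mem_Icc] at hr; omega
        have hxr : x r = 0 := (hx.1 r hr1).antisymm'
          (hi ▸ hx.antitoneOn (by simp) (Set.mem_Ici.2 hr1) hri)
        rw [hξ.dist l r hr1, hxr, ENNReal.ofReal_zero]
    filter_upwards [measure_eq_zero_iff_ae_notMem.1 hnull] with ω hω hωr
    exact absurd hωr hω
  filter_upwards [ae_all_iff.2 fun l => ae_all_iff.2 (hbox l)] with ω hω
  exact Ycount_le_of_forall_mem_Icc fun l => hω l _ rfl

end IsPaintbox

theorem statement6_general {Ω : Type*} [MeasurableSpace Ω] (P : Measure Ω) [IsProbabilityMeasure P]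
    (x : ℕ → ℝ) (hx : MemDelta x) (ξ : ℕ → Ω → ℕ) (hξ : IsPaintbox P x ξ)
    (i : ℕ) :
    ((∑ r ∈ Finset.Icc 1 i, x r) ≠ 1 →
      (∑' m : ℕ, (P {ω | Ycount ξ (i + 1 + m) ω = i ∧
          Ycount ξ (i + 1 + m + 1) ω = i + 1}).toReal) =
        (P {ω | Ycount ξ (i + 1) ω ≤ i}).toReal) ∧
    ((∑ r ∈ Finset.Icc 1 i, x r) = 1 →
      (∑' m : ℕ, (P {ω | Ycount ξ (i + 1 + m) ω = i ∧
          Ycount ξ (i + 1 + m + 1) ω = i + 1}).toReal) = 0) := by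
  rw [tsum_measure_eq_and_succ_eq_toReal (measurable_Ycount hξ.meas) (monotone_Ycount ξ)
    (Ycount_succ_le ξ)]
  refine ⟨fun hne => ?_, fun heq => ?_⟩
  · have hpos : 0 < xZero x ∨ 0 < x (i + 1) := by
      by_contra! h
      exact hne ((hx.sum_Icc_eq_one_iff i).2
        ⟨h.1.antisymm hx.xZero_nonneg, h.2.antisymm (hx.1 _ le_add_self)⟩)
    congr 1
    refine measure_congr (eventuallyEq_set.2 ?_)
    filter_upwards [hξ.ae_exists_le_Ycount hx hpos] with ω hω
    exact and_iff_left hω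
  · obtain ⟨h0, hi⟩ := (hx.sum_Icc_eq_one_iff i).1 heq
    rw [measure_eq_zero_iff_ae_notMem.2, ENNReal.toReal_zero]
    filter_upwards [hξ.ae_Ycount_le hx h0 hi] with ω hω
    rintro ⟨-, M, hM⟩
    exact (hω M).not_gt hM

/-- for `x ∈ Δ` and `i ≥ 1`,
`∑_{j=i+1}^{∞} P(Y(j,x) = i, Y(j+1,x) = i+1)` equals `P(Y(i+1,x) ≤ i)` if `x ∉ Δ_i`
(i.e. `x_1 + ⋯ + x_i ≠ 1`), and equals `0` if `x ∈ Δ_i` (i.e. `x_1 + ⋯ + x_i = 1`).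
The sum over `j ≥ i+1` is written as a sum over `m : ℕ` with `j = i + 1 + m`. -/
theorem statement6 {Ω : Type*} [MeasurableSpace Ω] (P : Measure Ω) [IsProbabilityMeasure P]
    (x : ℕ → ℝ) (hx : MemDelta x) (ξ : ℕ → Ω → ℕ) (hξ : IsPaintbox P x ξ)
    (i : ℕ) (hi : 1 ≤ i) :
    ((∑ r ∈ Finset.Icc 1 i, x r) ≠ 1 →
      (∑' m : ℕ, (P {ω | Ycount ξ (i + 1 + m) ω = i ∧
          Ycount ξ (i + 1 + m + 1) ω = i + 1}).toReal) =
        (P {ω | Ycount ξ (i + 1) ω ≤ i}).toReal) ∧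
    ((∑ r ∈ Finset.Icc 1 i, x r) = 1 →
      (∑' m : ℕ, (P {ω | Ycount ξ (i + 1 + m) ω = i ∧
          Ycount ξ (i + 1 + m + 1) ω = i + 1}).toReal) = 0) :=
  statement6_general P x hx ξ hξ i
end

section
/- Let 0 ≤ α < 1 and θ > −α with (α,θ) ≠ (0,0), and let i > j ≥ 1 be integers. Then the series Σ_{k=i}^{∞} s_α(k,j)/Γ(θ + k + 1) converges and (1/Γ(θ + i))·Σ_{k=1}^{j} c_{k,α,θ}·Γ(θ + αk)·s_α(i,k) = c_{j,α,θ}·Γ(θ + αj + 1)·Σ_{k=i}^{∞} s_α(k,j)/Γ(θ + k + 1), where c_{k,α,θ} := Π_{m=1}^{k} Γ(θ + 1 + (m−1)α)/(Γ(1−α)·Γ(θ + mα)) and s_α is defined by s_α(0,0) := 1, s_α(n,m) := 0 for m < 0 or m > n, and s_α(n+1,m) = Γ(1−α)·s_α(n,m−1) + (n − αm)·s_α(n,m). -/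
/-- `s_α`, defined by `s_α(0,0) = 1`, `s_α(n,m) = 0` for `m > n` (automatic below), and the
recursion `s_α(n+1,m) = Γ(1-α) s_α(n,m-1) + (n - αm) s_α(n,m)` (with `s_α(n,-1) := 0`). -/
noncomputable def salpha (α : ℝ) : ℕ → ℕ → ℝ
  | 0, 0 => 1
  | 0, _ + 1 => 0
  | n + 1, 0 => (n : ℝ) * salpha α n 0
  | n + 1, k + 1 =>
      Real.Gamma (1 - α) * salpha α n k + ((n : ℝ) - α * ((k : ℝ) + 1)) * salpha α n (k + 1)

/-- `c_{k,α,θ} := ∏_{m=1}^{k} Γ(θ + 1 + (m-1)α)/(Γ(1-α) Γ(θ + mα))`. -/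
noncomputable def ccoef (α θ : ℝ) (k : ℕ) : ℝ :=
  ∏ m ∈ Finset.range k,
    Real.Gamma (θ + 1 + m * α) / (Real.Gamma (1 - α) * Real.Gamma (θ + (m + 1) * α))

/-!
Summing over `n ≥ i` the one-step identity `q_{n,≤j} - q_{n+1,≤j} = γ_{jn}` (`n ≥ 1`) telescopes
to `q_{i,≤j}` once `q_{n,≤j} → 0`. The identity follows by induction on `j` from the recursion of
`s_α` together with `c_{j+1} Γ(θ+α(j+1)) Γ(1-α) = c_j Γ(θ+αj+1)`. The limit needs no asymptotics
of `Γ`: `q_{n,≤j}` is nonnegative and decreasing in `n`, and `q_{n,≤j}/(θ+n)` is the finite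
combination `∑_{k≤j} γ_{kn}/(θ+αk)` of series that telescope as well, so it is summable in `n`
while `∑ 1/(θ+n)` diverges.
-/

open Filter Topology Finset

theorem tendsto_zero_of_antitone_of_summable_mul {f g : ℕ → ℝ} (hf : Antitone f)
    (hf0 : ∀ n, 0 ≤ f n) (hg0 : ∀ n, 0 ≤ g n) (hg : ¬Summable g)
    (hfg : Summable fun n => f n * g n) : Tendsto f atTop (𝓝 0) := by
  have hbdd : BddBelow (Set.range f) := ⟨0, Set.forall_mem_range.2 hf0⟩
  suffices h : ⨅ n, f n = 0 by simpa [h] using tendsto_atTop_ciInf hf hbdd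
  refine le_antisymm (not_lt.1 fun hpos => hg ?_) (le_ciInf hf0)
  refine (hfg.div_const (⨅ n, f n)).of_nonneg_of_le hg0 fun n => ?_
  rw [le_div_iff₀ hpos, mul_comm (g n)]
  exact mul_le_mul_of_nonneg_right (ciInf_le hbdd n) (hg0 n)

theorem summable_of_eq_sub_succ {f g : ℕ → ℝ} (hf : ∀ n, 0 ≤ f n) (hg : ∀ n, 0 ≤ g n)
    (hfg : ∀ n, g n = f n - f (n + 1)) : Summable g :=
  summable_of_sum_range_le hg fun n => by
    rw [sum_congr rfl fun m _ => hfg m, sum_range_sub']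
    linarith [hf n]

theorem hasSum_of_eq_sub_succ {f g : ℕ → ℝ} (hg : ∀ n, 0 ≤ g n)
    (hfg : ∀ n, g n = f n - f (n + 1)) (hf : Tendsto f atTop (𝓝 0)) : HasSum g (f 0) := by
  rw [hasSum_iff_tendsto_nat_of_nonneg hg]
  have hsum : ∀ n, ∑ m ∈ range n, g m = f 0 - f n := fun n => by
    rw [sum_congr rfl fun m _ => hfg m, sum_range_sub']
  simpa [hsum] using tendsto_const_nhds (x := f 0).sub hf

theorem salpha_eq_zero_of_lt (α : ℝ) : ∀ {n k : ℕ}, n < k → salpha α n k = 0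
  | 0, _ + 1, _ => rfl
  | n + 1, k + 1, h => by
    rw [salpha, salpha_eq_zero_of_lt α (by omega), salpha_eq_zero_of_lt α (by omega)]
    ring

theorem salpha_succ_zero (α : ℝ) : ∀ n : ℕ, salpha α (n + 1) 0 = 0
  | 0 => by simp [salpha]
  | n + 1 => by rw [salpha, salpha_succ_zero α n, mul_zero]

theorem salpha_nonneg {α : ℝ} (h1 : α < 1) : ∀ n k : ℕ, 0 ≤ salpha α n k
  | 0, 0 => by simp [salpha]
  | 0, _ + 1 => le_rfl
  | n + 1, 0 => (salpha_succ_zero α n).ge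
  | n + 1, k + 1 => by
    rw [salpha]
    have hΓ := Real.Gamma_pos_of_pos (sub_pos.2 h1)
    refine add_nonneg (mul_nonneg hΓ.le (salpha_nonneg h1 n k)) ?_
    rcases lt_or_ge n (k + 1) with h | h
    · rw [salpha_eq_zero_of_lt α h, mul_zero]
    · have hk : ((k : ℝ) + 1) ≤ n := by exact_mod_cast h
      have : α * ((k : ℝ) + 1) ≤ (k : ℝ) + 1 := by nlinarith
      exact mul_nonneg (by linarith) (salpha_nonneg h1 n (k + 1))

section Rates

variable {α θ : ℝ}

/-- `Γ(θ+i) q_{i,≤j}`. -/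
noncomputable def rateSum (α θ : ℝ) (i j : ℕ) : ℝ :=
  ∑ k ∈ Icc 1 j, ccoef α θ k * Real.Gamma (θ + α * k) * salpha α i k

/-- `q_{i,≤j}`. -/
noncomputable def blockRateLE (α θ : ℝ) (i j : ℕ) : ℝ :=
  rateSum α θ i j / Real.Gamma (θ + i)

/-- `γ_{jk}`, the rate at which the fixation line jumps from `j` to `k`. -/
noncomputable def fixationRate (α θ : ℝ) (j k : ℕ) : ℝ :=
  ccoef α θ j * Real.Gamma (θ + α * j + 1) * salpha α k j / Real.Gamma (θ + k + 1)

theorem ccoef_pos (h0 : 0 ≤ α) (h1 : α < 1) (hθ : -α < θ) (k : ℕ) : 0 < ccoef α θ k :=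
  prod_pos fun m _ => by
    have hm : (0 : ℝ) ≤ m := m.cast_nonneg
    have := Real.Gamma_pos_of_pos (show 0 < θ + 1 + m * α by nlinarith)
    have := Real.Gamma_pos_of_pos (show 0 < 1 - α by linarith)
    have := Real.Gamma_pos_of_pos (show 0 < θ + (m + 1) * α by nlinarith)
    positivity

theorem ccoef_succ_mul (h0 : 0 ≤ α) (h1 : α < 1) (hθ : -α < θ) (j : ℕ) :
    ccoef α θ (j + 1) * Real.Gamma (θ + α * (j + 1 : ℕ)) * Real.Gamma (1 - α) =
      ccoef α θ j * Real.Gamma (θ + α * j + 1) := by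
  have hj : (0 : ℝ) ≤ j := j.cast_nonneg
  have hΓ₁ := (Real.Gamma_pos_of_pos (show 0 < 1 - α by linarith)).ne'
  have hΓ₂ := (Real.Gamma_pos_of_pos (show 0 < θ + α * (j + 1) by nlinarith)).ne'
  rw [ccoef, prod_range_succ, ← ccoef]
  push_cast
  rw [show θ + (j + 1) * α = θ + α * (j + 1) by ring, show θ + 1 + j * α = θ + α * j + 1 by ring]
  field_simp

theorem rateSum_succ (i j : ℕ) : rateSum α θ i (j + 1) =
    rateSum α θ i j + ccoef α θ (j + 1) * Real.Gamma (θ + α * (j + 1 : ℕ)) * salpha α i (j + 1) :=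
  sum_Icc_succ_top (by omega) _

theorem rateSum_recurrence (h0 : 0 ≤ α) (h1 : α < 1) (hθ : -α < θ) {n : ℕ} (hn : 1 ≤ n) :
    ∀ j : ℕ, (θ + n) * rateSum α θ n j - rateSum α θ (n + 1) j =
      ccoef α θ j * Real.Gamma (θ + α * j + 1) * salpha α n j
  | 0 => by
    obtain ⟨m, rfl⟩ := Nat.exists_eq_add_of_le' hn
    simp [rateSum, salpha_succ_zero]
  | j + 1 => by
    have ih := rateSum_recurrence h0 h1 hθ hn j
    have hj : (0 : ℝ) ≤ j := j.cast_nonneg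
    have hΓ : Real.Gamma (θ + α * (j + 1 : ℕ) + 1) =
        (θ + α * (j + 1 : ℕ)) * Real.Gamma (θ + α * (j + 1 : ℕ)) :=
      Real.Gamma_add_one (by push_cast; nlinarith)
    rw [rateSum_succ, rateSum_succ, salpha, hΓ]
    have hc := ccoef_succ_mul h0 h1 hθ j
    push_cast at ih hc ⊢
    linear_combination ih - salpha α n j * hc

theorem Gamma_add_natCast_pos (hθ : -1 < θ) {n : ℕ} (hn : 1 ≤ n) : 0 < Real.Gamma (θ + n) :=
  Real.Gamma_pos_of_pos (by linarith [show (1 : ℝ) ≤ n by exact_mod_cast hn])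

theorem blockRateLE_nonneg (h0 : 0 ≤ α) (h1 : α < 1) (hθ : -α < θ) {n : ℕ} (hn : 1 ≤ n)
    (j : ℕ) : 0 ≤ blockRateLE α θ n j := by
  refine div_nonneg (sum_nonneg fun k hk => ?_) (Gamma_add_natCast_pos (by linarith) hn).le
  have hk : (1 : ℝ) ≤ k := by exact_mod_cast (mem_Icc.1 hk).1
  have := Real.Gamma_pos_of_pos (show 0 < θ + α * k by nlinarith)
  have := ccoef_pos h0 h1 hθ k
  have := salpha_nonneg h1 n k
  positivity

theorem fixationRate_nonneg (h0 : 0 ≤ α) (h1 : α < 1) (hθ : -α < θ) (j k : ℕ) :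
    0 ≤ fixationRate α θ j k := by
  have := Real.Gamma_pos_of_pos (show 0 < θ + k + 1 by linarith [k.cast_nonneg (α := ℝ)])
  have := Real.Gamma_pos_of_pos (show 0 < θ + α * j + 1 by nlinarith [j.cast_nonneg (α := ℝ)])
  have := ccoef_pos h0 h1 hθ j
  have := salpha_nonneg h1 k j
  unfold fixationRate
  positivity

theorem blockRateLE_sub_succ (h0 : 0 ≤ α) (h1 : α < 1) (hθ : -α < θ) {n : ℕ} (hn : 1 ≤ n)
    (j : ℕ) : blockRateLE α θ n j - blockRateLE α θ (n + 1) j = fixationRate α θ j n := by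
  have hpos : θ + n ≠ 0 := by linarith [show (1 : ℝ) ≤ n by exact_mod_cast hn]
  have hΓ := (Gamma_add_natCast_pos (by linarith) hn).ne'
  rw [blockRateLE, blockRateLE, fixationRate, Nat.cast_succ, ← add_assoc,
    Real.Gamma_add_one hpos, ← rateSum_recurrence h0 h1 hθ hn j]
  field_simp

theorem blockRateLE_div_eq_sum (h0 : 0 ≤ α) (h1 : α < 1) (hθ : -α < θ) {n : ℕ} (hn : 1 ≤ n)
    (j : ℕ) :
    blockRateLE α θ n j / (θ + n) = ∑ k ∈ Icc 1 j, fixationRate α θ k n / (θ + α * k) := by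
  have hpos : θ + n ≠ 0 := by linarith [show (1 : ℝ) ≤ n by exact_mod_cast hn]
  have hΓ := (Gamma_add_natCast_pos (by linarith) hn).ne'
  rw [blockRateLE, rateSum, sum_div, sum_div]
  refine sum_congr rfl fun k hk => ?_
  have hk : (1 : ℝ) ≤ k := by exact_mod_cast (mem_Icc.1 hk).1
  have hαk : θ + α * k ≠ 0 := by nlinarith
  rw [fixationRate, Real.Gamma_add_one hαk, Real.Gamma_add_one hpos]
  field_simp

theorem summable_fixationRate (h0 : 0 ≤ α) (h1 : α < 1) (hθ : -α < θ) (j : ℕ) :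
    Summable (fixationRate α θ j) :=
  (summable_nat_add_iff 1).1 <|
    summable_of_eq_sub_succ (fun m => blockRateLE_nonneg h0 h1 hθ (Nat.le_add_left 1 m) j)
      (fun m => fixationRate_nonneg h0 h1 hθ j (m + 1))
      (fun m => (blockRateLE_sub_succ h0 h1 hθ (Nat.le_add_left 1 m) j).symm)

theorem not_summable_one_div_add_natCast_succ (hθ : -1 < θ) :
    ¬Summable fun m : ℕ => 1 / (θ + (m + 1 : ℕ)) := by
  have h := (Real.summable_one_div_nat_add_rpow (θ + 1) 1).not.2 (lt_irrefl 1)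
  refine fun hs => h (hs.congr fun m => ?_)
  rw [Real.rpow_one, abs_of_pos (by linarith [m.cast_nonneg (α := ℝ)])]
  push_cast
  ring

theorem tendsto_blockRateLE (h0 : 0 ≤ α) (h1 : α < 1) (hθ : -α < θ) (j : ℕ) :
    Tendsto (fun n => blockRateLE α θ n j) atTop (𝓝 0) := by
  have hn (m : ℕ) : 1 ≤ m + 1 := Nat.le_add_left 1 m
  refine (tendsto_add_atTop_iff_nat 1).1 <| tendsto_zero_of_antitone_of_summable_mul
    (g := fun m => 1 / (θ + (m + 1 : ℕ))) ?_ (fun m => blockRateLE_nonneg h0 h1 hθ (hn m) j)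
    (fun m => ?_) (not_summable_one_div_add_natCast_succ (by linarith)) ?_
  · refine antitone_nat_of_succ_le fun m => ?_
    linarith [blockRateLE_sub_succ h0 h1 hθ (hn m) j, fixationRate_nonneg h0 h1 hθ j (m + 1)]
  · exact one_div_nonneg.2 (by linarith [Nat.one_le_cast (α := ℝ).2 (hn m)])
  · simp_rw [mul_one_div, blockRateLE_div_eq_sum h0 h1 hθ (hn _)]
    exact summable_sum fun k _ =>
      ((summable_nat_add_iff 1).2 (summable_fixationRate h0 h1 hθ k)).div_const _

theorem hasSum_fixationRate (h0 : 0 ≤ α) (h1 : α < 1) (hθ : -α < θ) {i : ℕ} (hi : 1 ≤ i)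
    (j : ℕ) : HasSum (fun m => fixationRate α θ j (m + i)) (blockRateLE α θ i j) := by
  have hn (m : ℕ) : 1 ≤ m + i := le_add_left hi
  simpa using hasSum_of_eq_sub_succ (f := fun m => blockRateLE α θ (m + i) j)
    (fun m => fixationRate_nonneg h0 h1 hθ j (m + i))
    (fun m => by rw [add_right_comm, blockRateLE_sub_succ h0 h1 hθ (hn m)])
    ((tendsto_blockRateLE h0 h1 hθ j).comp (tendsto_add_atTop_nat i))

end Rates

theorem statement17_general (α θ : ℝ) (h0 : 0 ≤ α) (h1 : α < 1) (hθ : -α < θ)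
    (i j : ℕ) (hji : j < i) :
    ∃ S : ℝ,
      HasSum (fun m : ℕ => salpha α (m + i) j / Real.Gamma (θ + (m + i : ℕ) + 1)) S ∧
      (1 / Real.Gamma (θ + i)) *
          (∑ k ∈ Finset.Icc 1 j, ccoef α θ k * Real.Gamma (θ + α * k) * salpha α i k) =
        ccoef α θ j * Real.Gamma (θ + α * j + 1) * S := by
  set d := ccoef α θ j * Real.Gamma (θ + α * j + 1)
  have hd : d ≠ 0 := (mul_pos (ccoef_pos h0 h1 hθ j) (Real.Gamma_pos_of_pos
    (by nlinarith [j.cast_nonneg (α := ℝ)]))).ne'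
  have h := hasSum_fixationRate h0 h1 hθ (by omega : 1 ≤ i) j
  simp only [fixationRate, mul_div_assoc] at h
  refine ⟨blockRateLE α θ i j / d, (hasSum_mul_left_iff hd).1 ?_, ?_⟩
  · rwa [mul_div_cancel₀ _ hd]
  · rw [mul_div_cancel₀ _ hd, blockRateLE, rateSum, one_div_mul_eq_div]

/-- Siegmund duality for the two-parameter Poisson–Dirichlet coalescent:
for `0 ≤ α < 1`, `θ > -α`, `(α,θ) ≠ (0,0)` and integers `i > j ≥ 1`, the series
`∑_{k=i}^{∞} s_α(k,j)/Γ(θ+k+1)` converges, say to `S`, and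
`(1/Γ(θ+i)) ∑_{k=1}^{j} c_{k,α,θ} Γ(θ+αk) s_α(i,k) = c_{j,α,θ} Γ(θ+αj+1) S`
(the series over `k ≥ i` being indexed by `k = m + i`, `m : ℕ`). -/
theorem statement17 (α θ : ℝ) (h0 : 0 ≤ α) (h1 : α < 1) (hθ : -α < θ)
    (hne : ¬(α = 0 ∧ θ = 0)) (i j : ℕ) (hj : 1 ≤ j) (hji : j < i) :
    ∃ S : ℝ,
      HasSum (fun m : ℕ => salpha α (m + i) j / Real.Gamma (θ + (m + i : ℕ) + 1)) S ∧
      (1 / Real.Gamma (θ + i)) *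
          (∑ k ∈ Finset.Icc 1 j, ccoef α θ k * Real.Gamma (θ + α * k) * salpha α i k) =
        ccoef α θ j * Real.Gamma (θ + α * j + 1) * S :=
  statement17_general α θ h0 h1 hθ i j hji
end
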